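/- Let $V_{N+1} = 0$ and define backward $V_k(e) = \min_{\delta \in \{0,1\}} \{\theta_k \delta + (1-\delta) e^T A_k^T \Gamma_{k+1} A_k e + \mathrm{tr}(\Gamma_{k+1} W_k) + \mathbb{E}[V_{k+1}((1-\delta) A_k e + w_k)]\}$ where $w_k$ is centered Gaussian with covariance $W_k \succ 0$. Then for every $k$, $V_k$ is an even function of $e$. -/
import Mathlib


open MeasureTheory Real Matrix

/-- Centered Gaussian density with covariance `W` on `ℝⁿ`. -/
noncomputable def gaussDensity {n : ℕ} (W : Matrix (Fin n) (Fin n) ℝ) (w : Fin n → ℝ) : ℝ :=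
  (Real.sqrt ((2 * Real.pi) ^ n * W.det))⁻¹ * Real.exp (-(1/2) * (w ⬝ᵥ W⁻¹.mulVec w))


lemma gaussDensity_meas {n : ℕ} (W : Matrix (Fin n) (Fin n) ℝ) :
    Measurable fun w : Fin n → ℝ => (gaussDensity W w).toNNReal := by
  apply Measurable.real_toNNReal
  unfold gaussDensity
  simp only [dotProduct, Matrix.mulVec]
  measurability

/-- The event-trigger value function defined by the backward recursion
`V_k(e) = min_{δ ∈ {0,1}} { θ_k δ + (1-δ) eᵀ A_kᵀ Γ_{k+1} A_k e + tr(Γ_{k+1} W_k)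
+ E[V_{k+1}((1-δ) A_k e + w_k)] }`, with `w_k` centered Gaussian of covariance
`W_k ≻ 0` and `V_{N+1} = 0`, is an even function of `e` for every `k ≤ N+1`. -/
theorem stmt12 {n : ℕ} (N : ℕ) (θ : ℕ → ℝ) (hθ : ∀ k, 0 ≤ θ k)
    (A Γ W : ℕ → Matrix (Fin n) (Fin n) ℝ)
    (hΓ : ∀ k, (Γ k).PosSemidef) (hW : ∀ k, (W k).PosDef)
    (ν : ℕ → Measure (Fin n → ℝ))
    (hν : ∀ k, ν k = volume.withDensity fun w => ENNReal.ofReal (gaussDensity (W k) w))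
    (V : ℕ → (Fin n → ℝ) → ℝ)
    (hVN : ∀ e, V (N+1) e = 0)
    (hint : ∀ k ≤ N, ∀ e : Fin n → ℝ,
      Integrable (fun w => V (k+1) ((A k).mulVec e + w)) (ν k))
    (hint1 : ∀ k ≤ N, Integrable (fun w => V (k+1) w) (ν k))
    (hrec : ∀ k ≤ N, ∀ e : Fin n → ℝ, V k e =
      min (θ k + (Γ (k+1) * W k).trace + ∫ w, V (k+1) w ∂(ν k))
        ((A k).mulVec e ⬝ᵥ (Γ (k+1)).mulVec ((A k).mulVec e) + (Γ (k+1) * W k).trace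
          + ∫ w, V (k+1) ((A k).mulVec e + w) ∂(ν k))) :
    ∀ k ≤ N + 1, ∀ e : Fin n → ℝ, V k (-e) = V k e := by
  
  -- gaussDensity is even
  have geven : ∀ k (w : Fin n → ℝ), gaussDensity (W k) (-w) = gaussDensity (W k) w := by
    intro k w
    simp [gaussDensity, Matrix.mulVec_neg, neg_dotProduct, dotProduct_neg]
  have gmeas : ∀ k, Measurable fun w : Fin n → ℝ => (gaussDensity (W k) w).toNNReal :=
    fun k => gaussDensity_meas (W k)
  -- integrals against ν k are invariant under negation
  have hkey : ∀ k (f : (Fin n → ℝ) → ℝ), ∫ w, f (-w) ∂(ν k) = ∫ w, f w ∂(ν k) := by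
    intro k f
    rw [hν k]
    have hrw : (fun w => ENNReal.ofReal (gaussDensity (W k) w))
        = fun w => ((gaussDensity (W k) w).toNNReal : ENNReal) := by
      ext w; simp [ENNReal.ofReal]
    rw [hrw, integral_withDensity_eq_integral_smul (gmeas k),
      integral_withDensity_eq_integral_smul (gmeas k)]
    have := integral_neg_eq_self
      (fun w => (gaussDensity (W k) w).toNNReal • f (-w)) (volume : Measure (Fin n → ℝ))
    simp only [neg_neg] at this
    rw [← this]
    congr 1
    ext w
    rw [geven k w]
  suffices h : ∀ d k, k + d = N + 1 → ∀ e : Fin n → ℝ, V k (-e) = V k e by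
    intro k hk e
    exact h (N + 1 - k) k (by omega) e
  intro d
  induction d with
  | zero =>
    intro k hk e
    have : k = N + 1 := by omega
    subst this
    rw [hVN, hVN]
  | succ d ih =>
    intro k hk e
    have hkN : k ≤ N := by omega
    have ih' : ∀ e : Fin n → ℝ, V (k+1) (-e) = V (k+1) e := ih (k+1) (by omega)
    rw [hrec k hkN, hrec k hkN]
    congr 1
    have hq : (A k).mulVec (-e) ⬝ᵥ (Γ (k+1)).mulVec ((A k).mulVec (-e))
        = (A k).mulVec e ⬝ᵥ (Γ (k+1)).mulVec ((A k).mulVec e) := by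
      simp [Matrix.mulVec_neg, neg_dotProduct, dotProduct_neg]
    rw [hq]
    congr 1
    have h1 : ∀ w : Fin n → ℝ, V (k+1) ((A k).mulVec (-e) + w)
        = V (k+1) ((A k).mulVec e + (- w)) := by
      intro w
      rw [Matrix.mulVec_neg]
      have := ih' ((A k).mulVec e + (-w))
      rw [← this]
      congr 1
      abel
    simp only [h1]
    exact hkey k (fun w => V (k+1) ((A k).mulVec e + w))
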